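/- arXiv:1301.2647 — 2 statements merged into one kernel-verified Lean document; each statement's English description precedes it below -/
import Mathlib

section
/- In ℚ[[q]], the identity (1+q²)/(1-(n-1)q²) = (1-q⁴)/(1-q²)^n · ∏_{k=2}^∞ (1-q^{2k})^{-ℓ_{n-1}(k)} holds, where ℓ_{n-1}(k) is the necklace number (1/k)∑_{d|k} μ(d)(n-1)^{k/d}. -/
/-!
Put `W = ∏_{k ≤ N} (1 - q^{2k})^{ℓ_{n-1}(k)}`. Since `ℓ_{n-1}(1) = n - 1` and
`1 - q⁴ = (1 + q²)(1 - q²)`, the right-hand side equals `(1 + q²) / W`, so it suffices to know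
Witt's formula `W ≡ 1 - (n - 1) q²` modulo `q^{2N+2}`.

Over `ℚ`, two units with the same constant term agree modulo `X^M` as soon as `X` times their
logarithmic derivatives do, and `X · dlog (1 - c X^s) = -s ∑_{j ≥ 1} c^j X^{sj}`. Comparing
coefficients of `X^{sj}` reduces Witt's formula to `∑_{k ∣ j} k ℓ_m(k) = m^j`, the Möbius
inversion of the definition of `ℓ_m`. That the division defining `ℓ_m(k)` is exact is checked one
prime `p` at a time: pairing each divisor `d` prime to `p` with `p d` leaves differences
`m^{p f} - m^f` with `p^a ∣ p f`, which Fermat's little theorem makes divisible by `p^a`.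
-/

open PowerSeries Finset

/-- The power series `1 - q^(m+1)`, as a unit of `ℚ⟦X⟧`. -/
noncomputable def uQ (m : ℕ) : (PowerSeries ℚ)ˣ :=
  ((PowerSeries.isUnit_iff_constantCoeff (φ := 1 - X ^ (m + 1))).mpr (by simp)).unit

/-- A power series with constant term `1`, as a unit of `ℚ⟦X⟧`. -/
noncomputable def psUnit (f : PowerSeries ℚ) (h : constantCoeff f = 1) :
    (PowerSeries ℚ)ˣ :=
  (PowerSeries.isUnit_iff_constantCoeff.mpr (by rw [h]; exact isUnit_one)).unit

/-- The necklace (Witt) number `ℓ_n(k) = (1/k) ∑_{d ∣ k} μ(d) n^(k/d)` (exact division). -/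
def necklace (n k : ℕ) : ℤ :=
  (∑ d ∈ Nat.divisors k, (ArithmeticFunction.moebius d : ℤ) * (n : ℤ) ^ (k / d)) / k

open ArithmeticFunction
open scoped ArithmeticFunction.Moebius

theorem Int.prime_dvd_pow_sub_self (m : ℤ) {p : ℕ} (hp : p.Prime) : (p : ℤ) ∣ m ^ p - m := by
  have := Fact.mk hp
  rw [← ZMod.intCast_zmod_eq_zero_iff_dvd]
  push_cast
  rw [ZMod.pow_card, sub_self]

theorem Int.prime_pow_dvd_pow_mul_sub_pow (m : ℤ) {p a f : ℕ} (hp : p.Prime)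
    (h : p ^ a ∣ p * f) : (p : ℤ) ^ a ∣ m ^ (p * f) - m ^ f := by
  rcases a with _ | b
  · exact one_dvd _
  obtain ⟨t, rfl⟩ : p ^ b ∣ f := by
    rwa [pow_succ', Nat.mul_dvd_mul_iff_left hp.pos] at h
  have key := dvd_sub_pow_of_dvd_sub (Int.prime_dvd_pow_sub_self (m ^ t) hp) b
  rwa [← pow_mul, ← pow_mul, ← pow_mul, show t * (p * p ^ b) = p * (p ^ b * t) by ring,
    mul_comm t] at key

theorem Nat.sum_divisors_eq_sum_filter_not_dvd_add {M : Type*} [AddCommMonoid M] (f : ℕ → M)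
    {p k : ℕ} (hp : p.Prime) (hpk : p ∣ k) (hf : ∀ d, p * p ∣ d → f d = 0) :
    ∑ d ∈ k.divisors, f d = ∑ d ∈ k.divisors with ¬p ∣ d, (f d + f (p * d)) := by
  rw [← sum_filter_not_add_sum_filter k.divisors (p ∣ ·), sum_add_distrib,
    ← sum_image fun a _ b _ h => Nat.eq_of_mul_eq_mul_left hp.pos h]
  congr 1
  refine (sum_subset (fun d hd => ?_) fun d hd hd' => hf d ?_).symm
  · obtain ⟨e, he, rfl⟩ := mem_image.mp hd
    simp only [mem_filter, Nat.mem_divisors] at he ⊢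
    exact ⟨⟨hp.coprime_iff_not_dvd.mpr he.2 |>.mul_dvd_of_dvd_of_dvd hpk he.1.1, he.1.2⟩,
      dvd_mul_right p e⟩
  · simp only [mem_filter, Nat.mem_divisors, mem_image] at hd hd'
    obtain ⟨⟨hdk, hk⟩, e, rfl⟩ := hd
    have hpe : p ∣ e := by
      by_contra hpe
      exact hd' ⟨e, ⟨⟨(dvd_mul_left e p).trans hdk, hk⟩, hpe⟩, rfl⟩
    exact mul_dvd_mul_left p hpe

theorem prime_pow_dvd_sum_moebius_mul_pow (m : ℤ) {p a k : ℕ} (hp : p.Prime)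
    (hpk : p ^ a ∣ k) : (p : ℤ) ^ a ∣ ∑ d ∈ k.divisors, μ d * m ^ (k / d) := by
  rcases a with _ | b
  · exact one_dvd _
  have hp_dvd_k : p ∣ k := (dvd_pow_self p b.succ_ne_zero).trans hpk
  rw [Nat.sum_divisors_eq_sum_filter_not_dvd_add _ hp hp_dvd_k]
  · refine dvd_sum fun d hd => ?_
    simp only [mem_filter, Nat.mem_divisors] at hd
    obtain ⟨⟨hdk, hk⟩, hpd⟩ := hd
    have hcop : p.Coprime d := (Nat.Prime.coprime_iff_not_dvd hp).mpr hpd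
    have hpdk : p * d ∣ k := hcop.mul_dvd_of_dvd_of_dvd hp_dvd_k hdk
    have hkd : k / d = p * (k / (p * d)) := by
      rw [← Nat.mul_div_assoc _ hpdk, Nat.mul_div_mul_left _ _ hp.pos]
    have hμ : (μ (p * d) : ℤ) = -μ d := by
      rw [isMultiplicative_moebius.map_mul_of_coprime hcop, moebius_apply_prime hp, neg_one_mul]
    rw [hμ, hkd, neg_mul, ← sub_eq_add_neg, ← mul_sub]
    refine dvd_mul_of_dvd_right (Int.prime_pow_dvd_pow_mul_sub_pow m hp ?_) _
    rw [← hkd]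
    exact (Nat.Coprime.pow_left _ hcop).dvd_of_dvd_mul_left (by rwa [Nat.mul_div_cancel' hdk])
  · intro d hd
    rw [moebius_eq_zero_of_not_squarefree fun h => hp.not_isUnit (h p hd), zero_mul]

theorem dvd_sum_moebius_mul_pow (m : ℤ) (k : ℕ) :
    (k : ℤ) ∣ ∑ d ∈ k.divisors, μ d * m ^ (k / d) := by
  rw [Int.natCast_dvd, Nat.dvd_iff_prime_pow_dvd_dvd]
  intro p a hp hpk
  exact Int.natCast_dvd.mp (by exact_mod_cast prime_pow_dvd_sum_moebius_mul_pow m hp hpk)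

theorem mul_necklace (m k : ℕ) :
    (k : ℤ) * necklace m k = ∑ d ∈ k.divisors, μ d * (m : ℤ) ^ (k / d) :=
  Int.mul_ediv_cancel' (dvd_sum_moebius_mul_pow _ _)

theorem sum_divisors_mul_necklace (m : ℕ) {j : ℕ} (hj : 0 < j) :
    ∑ k ∈ j.divisors, (k : ℤ) * necklace m k = (m : ℤ) ^ j := by
  refine sum_eq_iff_sum_mul_moebius_eq.mpr (fun k _ => ?_) j hj
  simp only [Int.cast_id, mul_necklace]
  exact Nat.sum_divisorsAntidiagonal fun d e => (μ d : ℤ) * (m : ℤ) ^ e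

theorem necklace_one (m : ℕ) : necklace m 1 = m := by
  simp [necklace]

namespace PowerSeries

variable {R : Type*} [CommRing R]

theorem trunc_eq_trunc_of_X_pow_dvd_sub {f g : R⟦X⟧} {N : ℕ} (h : X ^ N ∣ f - g) :
    trunc N f = trunc N g := by
  obtain ⟨q, hq⟩ := h
  rw [← sub_eq_zero, ← trunc_sub, hq, trunc_X_pow_self_mul]

theorem X_pow_dvd_sub_constantCoeff_of_X_pow_dvd_X_mul_derivative [IsAddTorsionFree R]
    {f : R⟦X⟧} {M : ℕ} (h : X ^ M ∣ X * d⁄dX R f) : X ^ M ∣ f - C (constantCoeff f) := by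
  rw [X_pow_dvd_iff] at h ⊢
  rintro (_ | j) hj
  · simp
  have hcoeff := h (j + 1) hj
  rw [coeff_succ_X_mul, coeff_derivative] at hcoeff
  rw [map_sub, coeff_C, if_neg j.succ_ne_zero, sub_zero]
  refine nsmul_right_injective j.succ_ne_zero ?_
  simp only [nsmul_eq_mul', smul_zero]
  exact_mod_cast hcoeff

noncomputable def dlog (u : R⟦X⟧ˣ) : R⟦X⟧ :=
  d⁄dX R u * ↑u⁻¹

theorem dlog_mul (u v : R⟦X⟧ˣ) : dlog (u * v) = dlog u + dlog v := by
  simp only [dlog, Units.val_mul, mul_inv_rev, Derivation.leibniz, smul_eq_mul]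
  linear_combination (d⁄dX R v * ↑v⁻¹) * Units.mul_inv u + (d⁄dX R u * ↑u⁻¹) * Units.mul_inv v

noncomputable def dlogHom : Additive R⟦X⟧ˣ →+ R⟦X⟧ :=
  AddMonoidHom.mk' (fun u => dlog u.toMul) fun u v => dlog_mul u.toMul v.toMul

theorem dlogHom_apply (u : Additive R⟦X⟧ˣ) : dlogHom u = dlog u.toMul := rfl

theorem dlog_div (u v : R⟦X⟧ˣ) : dlog (u / v) = dlog u - dlog v := by
  simpa [dlogHom_apply] using map_sub dlogHom (.ofMul u) (.ofMul v)

theorem dlog_zpow (u : R⟦X⟧ˣ) (z : ℤ) : dlog (u ^ z) = z • dlog u := by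
  simpa [dlogHom_apply] using map_zsmul dlogHom z (.ofMul u)

theorem dlog_prod {ι : Type*} (s : Finset ι) (u : ι → R⟦X⟧ˣ) :
    dlog (∏ i ∈ s, u i) = ∑ i ∈ s, dlog (u i) := by
  simpa only [← ofMul_prod, dlogHom_apply, toMul_ofMul] using
    map_sum dlogHom (fun i => Additive.ofMul (u i)) s

theorem X_pow_dvd_sub_of_X_pow_dvd_X_mul_dlog_sub [IsAddTorsionFree R] {u v : R⟦X⟧ˣ} {M : ℕ}
    (h0 : constantCoeff (u : R⟦X⟧) = constantCoeff (v : R⟦X⟧))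
    (h : X ^ M ∣ X * (dlog u - dlog v)) : X ^ M ∣ (u : R⟦X⟧) - (v : R⟦X⟧) := by
  have hval : ((u / v : R⟦X⟧ˣ) : R⟦X⟧) = u * (↑v⁻¹ : R⟦X⟧) := by
    rw [div_eq_mul_inv, Units.val_mul]
  have hderiv : X * d⁄dX R ↑(u / v) = X * (dlog u - dlog v) * (↑(u / v) : R⟦X⟧) := by
    rw [← dlog_div, dlog, mul_assoc, mul_assoc, Units.inv_mul, mul_one]
  have hconst : constantCoeff ((u / v : R⟦X⟧ˣ) : R⟦X⟧) = 1 := by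
    rw [hval, map_mul, h0, ← map_mul, Units.mul_inv, map_one]
  have hdvd := X_pow_dvd_sub_constantCoeff_of_X_pow_dvd_X_mul_derivative
    (hderiv ▸ dvd_mul_of_dvd_left h _)
  rw [hconst, map_one, hval] at hdvd
  convert dvd_mul_of_dvd_left hdvd (v : R⟦X⟧) using 1
  linear_combination (-(u : R⟦X⟧)) * Units.inv_mul v

variable {c : R} {s : ℕ} {u : R⟦X⟧ˣ}

theorem coeff_inv_of_val_eq_one_sub_C_mul_X_pow (hs : 0 < s)
    (hu : (u : R⟦X⟧) = 1 - C c * X ^ s) (i : ℕ) :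
    coeff i (↑u⁻¹ : R⟦X⟧) = if s ∣ i then c ^ (i / s) else 0 := by
  suffices hinv : (↑u⁻¹ : R⟦X⟧) = mk fun i => if s ∣ i then c ^ (i / s) else 0 by
    rw [hinv, coeff_mk]
  refine Units.inv_eq_of_mul_eq_one_right ?_
  ext i
  rw [hu, sub_mul, one_mul, map_sub, mul_assoc, coeff_C_mul, coeff_X_pow_mul', coeff_one,
    coeff_mk]
  rcases lt_or_ge i s with hi | hi
  · rcases eq_or_ne i 0 with rfl | hi0
    · simp [hs.ne']
    · simp [hi0, hi.not_ge, mt (Nat.eq_zero_of_dvd_of_lt · hi) hi0]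
  · obtain ⟨j, rfl⟩ := Nat.exists_eq_add_of_le' hi
    simp only [if_pos hi, coeff_mk, Nat.add_sub_cancel, Nat.dvd_add_self_right,
      Nat.add_div_right _ hs, if_neg (by omega : j + s ≠ 0)]
    split_ifs <;> ring

theorem coeff_X_mul_dlog_of_val_eq_one_sub_C_mul_X_pow (hs : 0 < s)
    (hu : (u : R⟦X⟧) = 1 - C c * X ^ s) {i : ℕ} (hi : i ≠ 0) :
    coeff i (X * dlog u) = if s ∣ i then -(s * c ^ (i / s)) else 0 := by
  have euler : X * d⁄dX R ↑u = C (s : R) * ((u : R⟦X⟧) - 1) := by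
    obtain ⟨t, rfl⟩ := Nat.exists_eq_add_one_of_ne_zero hs.ne'
    rw [hu, map_sub, derivative_one, Derivation.leibniz, derivative_pow, derivative_C,
      derivative_X]
    simp only [smul_eq_mul, map_natCast, Nat.add_sub_cancel]
    ring
  have hXdlog : X * dlog u = C (s : R) * (1 - (↑u⁻¹ : R⟦X⟧)) := by
    rw [dlog, ← mul_assoc, euler]
    linear_combination C (s : R) * Units.mul_inv u
  rw [hXdlog, coeff_C_mul, map_sub, coeff_one, if_neg hi,
    coeff_inv_of_val_eq_one_sub_C_mul_X_pow hs hu]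
  split_ifs <;> ring

end PowerSeries

theorem Nat.filter_dvd_Icc_one_eq_divisors {j N : ℕ} (hj : j ≠ 0) (hjN : j ≤ N) :
    {k ∈ Icc 1 N | k ∣ j} = j.divisors := by
  ext k
  simp only [mem_filter, mem_Icc, Nat.mem_divisors]
  constructor
  · rintro ⟨-, hk⟩
    exact ⟨hk, hj⟩
  · rintro ⟨hk, -⟩
    exact ⟨⟨Nat.pos_of_dvd_of_pos hk (Nat.pos_of_ne_zero hj),
      (Nat.le_of_dvd (Nat.pos_of_ne_zero hj) hk).trans hjN⟩, hk⟩

theorem val_uQ_sub_one {j : ℕ} (hj : j ≠ 0) : (uQ (j - 1) : ℚ⟦X⟧) = 1 - X ^ j := by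
  obtain ⟨i, rfl⟩ := Nat.exists_eq_add_one_of_ne_zero hj
  rw [Nat.add_sub_cancel]
  rfl

theorem coeff_X_mul_dlog_prod_zpow_necklace (m : ℕ) {s N i : ℕ} (hs : 0 < s) (hi : i ≠ 0)
    (hiN : i < s * (N + 1)) :
    coeff i (X * dlog (∏ k ∈ Icc 1 N, uQ (s * k - 1) ^ necklace m k)) =
      if s ∣ i then -(s * (m : ℚ) ^ (i / s)) else 0 := by
  have hfactor : ∀ k ∈ Icc 1 N, coeff i (X * dlog (uQ (s * k - 1) ^ necklace m k)) =
      if s * k ∣ i then -(s * k * necklace m k : ℚ) else 0 := by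
    intro k hk
    have hsk : s * k ≠ 0 := Nat.mul_ne_zero hs.ne' (by simp at hk; omega)
    rw [dlog_zpow, mul_smul_comm, map_zsmul, coeff_X_mul_dlog_of_val_eq_one_sub_C_mul_X_pow
      (Nat.pos_of_ne_zero hsk) (by rw [val_uQ_sub_one hsk, map_one, one_mul]) hi]
    split_ifs <;> push_cast [zsmul_eq_mul, one_pow] <;> ring
  rw [dlog_prod, mul_sum, map_sum, sum_congr rfl hfactor]
  split_ifs with hsi
  · obtain ⟨j, rfl⟩ := hsi
    have hj : j ≠ 0 := by rintro rfl; simp at hi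
    simp only [Nat.mul_dvd_mul_iff_left hs, ← sum_filter,
      Nat.filter_dvd_Icc_one_eq_divisors hj (by nlinarith), Nat.mul_div_cancel_left _ hs]
    have hsum := congrArg (Int.cast : ℤ → ℚ) (sum_divisors_mul_necklace m (Nat.pos_of_ne_zero hj))
    push_cast at hsum
    rw [← hsum, mul_sum, ← sum_neg_distrib]
    refine sum_congr rfl fun k _ => by ring
  · exact sum_eq_zero fun k _ => if_neg fun h => hsi ((dvd_mul_right s k).trans h)

theorem X_pow_dvd_prod_zpow_necklace_sub (m : ℕ) {s : ℕ} (hs : 0 < s) (N : ℕ) :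
    X ^ (s * (N + 1)) ∣
      ((∏ k ∈ Icc 1 N, uQ (s * k - 1) ^ necklace m k : ℚ⟦X⟧ˣ) : ℚ⟦X⟧) -
        (1 - C (m : ℚ) * X ^ s) := by
  set G := psUnit (1 - C (m : ℚ) * X ^ s) (by simp [hs.ne'])
  have hconst : constantCoeff ((∏ k ∈ Icc 1 N, uQ (s * k - 1) ^ necklace m k : ℚ⟦X⟧ˣ) : ℚ⟦X⟧) =
      constantCoeff (G : ℚ⟦X⟧) := by
    let cc := Units.map (constantCoeff : ℚ⟦X⟧ →+* ℚ).toMonoidHom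
    have hcc : ∀ j, cc (uQ j) = 1 := fun j => Units.ext (by simp [cc, uQ])
    change (cc (∏ k ∈ Icc 1 N, uQ (s * k - 1) ^ necklace m k) : ℚ) = _
    simp [map_prod, map_zpow, hcc, G, psUnit, hs.ne']
  refine X_pow_dvd_sub_of_X_pow_dvd_X_mul_dlog_sub (v := G) hconst
    (X_pow_dvd_iff.mpr fun i hi => ?_)
  rcases eq_or_ne i 0 with rfl | hi0
  · exact coeff_zero_X_mul _
  rw [mul_sub, map_sub, coeff_X_mul_dlog_prod_zpow_necklace m hs hi0 hi,
    coeff_X_mul_dlog_of_val_eq_one_sub_C_mul_X_pow hs rfl hi0, sub_self]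

/-- The infinite product is truncated at `k = N`, which does not affect `trunc N`. -/
theorem flag_poincare_identity (n : ℕ) (hn : 2 ≤ n) :
    ∀ N : ℕ,
      trunc N ((psUnit (1 + X ^ 2) (by simp) *
          (psUnit (1 - C ((n : ℚ) - 1) * X ^ 2) (by simp))⁻¹ : (PowerSeries ℚ)ˣ) :
        PowerSeries ℚ) =
      trunc N ((uQ 3 * ((uQ 1)⁻¹) ^ n *
          ∏ k ∈ Finset.Icc 2 N, uQ (2 * k - 1) ^ (-(necklace (n - 1) k)) :
            (PowerSeries ℚ)ˣ) : PowerSeries ℚ) := by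
  intro N
  rcases N.eq_zero_or_pos with rfl | hN
  · simp
  set A := psUnit (1 + X ^ 2) (by simp)
  set G := psUnit (1 - C ((n : ℚ) - 1) * X ^ 2) (by simp)
  set W := ∏ k ∈ Icc 1 N, uQ (2 * k - 1) ^ necklace (n - 1) k with hWdef
  have hWG : X ^ N ∣ (W : ℚ⟦X⟧) - (G : ℚ⟦X⟧) := by
    have hwitt := X_pow_dvd_prod_zpow_necklace_sub (n - 1) two_pos N
    rw [Nat.cast_sub (by omega), Nat.cast_one] at hwitt
    exact (pow_dvd_pow X (by omega)).trans hwitt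
  have hRHS : uQ 3 * (uQ 1)⁻¹ ^ n * ∏ k ∈ Icc 2 N, uQ (2 * k - 1) ^ (-necklace (n - 1) k) =
      A * W⁻¹ := by
    have hu3 : uQ 3 = A * uQ 1 := Units.ext (by
      change (1 - X ^ 4 : ℚ⟦X⟧) = (1 + X ^ 2) * (1 - X ^ 2)
      ring)
    have hW : W = uQ 1 ^ ((n : ℤ) - 1) * ∏ k ∈ Icc 2 N, uQ (2 * k - 1) ^ necklace (n - 1) k := by
      rw [hWdef, ← insert_Icc_add_one_left_eq_Icc (by omega : 1 ≤ N), prod_insert (by simp),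
        necklace_one, Nat.cast_sub (by omega), Nat.cast_one]
      rfl
    simp only [zpow_neg, prod_inv_distrib, hu3, hW]
    group
    ac_rfl
  rw [hRHS]
  refine trunc_eq_trunc_of_X_pow_dvd_sub ?_
  have hdiff : ((A * G⁻¹ : ℚ⟦X⟧ˣ) : ℚ⟦X⟧) - ↑(A * W⁻¹) =
      ↑A * ↑G⁻¹ * ↑W⁻¹ * ((W : ℚ⟦X⟧) - (G : ℚ⟦X⟧)) := by
    push_cast
    linear_combination
      (↑A * ↑W⁻¹ : ℚ⟦X⟧) * Units.inv_mul G - (↑A * ↑G⁻¹ : ℚ⟦X⟧) * Units.inv_mul W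
  rw [hdiff]
  exact dvd_mul_of_dvd_right hWG _
end

section
/- If two sequences of integers (i_k) and (j_k) satisfy ∏_{k=1}^∞ (1-q^k)^{i_k} = ∏_{k=1}^∞ (1-q^k)^{j_k} in ℤ[[q]], then i_k = j_k for all k. -/
/-!
Reduce modulo `X ^ (n + 2)`. There `X ^ (n + 1)` squares to zero, so `(1 - X ^ (n + 1)) ^ e`
becomes `1 - e X ^ (n + 1)` for every integer `e`, while the factors `(1 - X ^ k) ^ e` with
`k ≥ n + 2` become `1`. If the exponents agree below `n + 1`, comparing the two products
modulo `X ^ (n + 2)` and cancelling their common unit part leaves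
`i (n + 1) X ^ (n + 1) ≡ j (n + 1) X ^ (n + 1)`, so `i (n + 1) = j (n + 1)`; strong induction
on `n` finishes.
-/

open PowerSeries Finset

/-- The power series `1 - q^(k+1)`, as a unit of `ℤ⟦X⟧`. -/
noncomputable def oneSubX (k : ℕ) : (PowerSeries ℤ)ˣ :=
  ((PowerSeries.isUnit_iff_constantCoeff (φ := 1 - X ^ (k + 1))).mpr (by simp)).unit

/-- `f = ∏_{k=1}^∞ (1 - q^k)^(i k)` in `ℤ⟦X⟧`, interpreted q-adically: modulo `q^N`, `f`
agrees with the finite product of the factors `(1 - q^k)^(i k)` for `1 ≤ k ≤ N`. -/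
def HasProdExpansion (f : PowerSeries ℤ) (i : ℕ → ℤ) : Prop :=
  ∀ N : ℕ, trunc N f =
    trunc N ((∏ k ∈ range N, oneSubX k ^ i (k + 1) : (PowerSeries ℤ)ˣ) : PowerSeries ℤ)

theorem PowerSeries.trunc_eq_trunc_iff_mk_eq {R : Type*} [CommRing R] {N : ℕ} {f g : R⟦X⟧} :
    trunc N f = trunc N g ↔
      Ideal.Quotient.mk (Ideal.span {X ^ N}) f = Ideal.Quotient.mk (Ideal.span {X ^ N}) g := by
  rw [Ideal.Quotient.eq, Ideal.mem_span_singleton, X_pow_dvd_iff, Polynomial.ext_iff]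
  refine forall_congr' fun m => ?_
  simp only [coeff_trunc, map_sub, sub_eq_zero]
  split_ifs with hm <;> simp [hm]

theorem PowerSeries.mk_X_pow_eq_zero_of_le {R : Type*} [CommRing R] {N m : ℕ} (h : N ≤ m) :
    Ideal.Quotient.mk (Ideal.span {(X : R⟦X⟧) ^ N}) (X ^ m) = 0 := by
  rw [Ideal.Quotient.eq_zero_iff_mem, Ideal.mem_span_singleton]
  exact pow_dvd_pow X h

theorem Units.val_zpow_of_val_eq_one_sub {R : Type*} [CommRing R] {u : Rˣ} {ε : R}
    (hu : (u : R) = 1 - ε) (hε : ε ^ 2 = 0) (e : ℤ) : ((u ^ e : Rˣ) : R) = 1 - e * ε := by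
  have hinv : ((u⁻¹ : Rˣ) : R) = 1 + ε :=
    Units.inv_eq_of_mul_eq_one_right (by linear_combination hu * (1 + ε) - hε)
  induction e using Int.induction_on with
  | zero => simp
  | succ e ih =>
    rw [zpow_add_one, Units.val_mul, ih, hu]; push_cast; linear_combination e * hε
  | pred e ih =>
    rw [zpow_sub_one, Units.val_mul, ih, hinv]; push_cast; linear_combination e * hε

theorem Units.map_val_zpow {M N F : Type*} [Monoid M] [Monoid N] [FunLike F M N]
    [MonoidHomClass F M N] (f : F) (u : Mˣ) (e : ℤ) :
    f ↑(u ^ e) = ↑(Units.map (f : M →* N) u ^ e) := by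
  rw [← map_zpow, Units.coe_map, MonoidHom.coe_coe]

lemma oneSubX_val (k : ℕ) : (oneSubX k : ℤ⟦X⟧) = 1 - X ^ (k + 1) := by
  simp [oneSubX]

section ModXPow

variable (n : ℕ)

local notation "π" => Ideal.Quotient.mk (Ideal.span {(X : ℤ⟦X⟧) ^ (n + 2)})

lemma mk_oneSubX_zpow_of_lt {k : ℕ} (hk : n < k) (e : ℤ) : π ↑(oneSubX k ^ e) = 1 := by
  have h1 : π ↑(oneSubX k) = 1 := by
    rw [oneSubX_val, map_sub, map_one, mk_X_pow_eq_zero_of_le (by omega), sub_zero]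
  rw [Units.map_val_zpow, ← Units.val_one, Units.val_inj]
  exact (congrArg (· ^ e) (Units.ext h1)).trans (one_zpow e)

lemma mk_oneSubX_zpow (e : ℤ) : π ↑(oneSubX n ^ e) = 1 - e * π (X ^ (n + 1)) := by
  rw [Units.map_val_zpow]
  refine Units.val_zpow_of_val_eq_one_sub ?_ ?_ e
  · rw [Units.coe_map, MonoidHom.coe_coe, oneSubX_val, map_sub, map_one]
  · rw [← map_pow, ← pow_mul]
    exact mk_X_pow_eq_zero_of_le (by omega)

lemma mk_prod_oneSubX_zpow (i : ℕ → ℤ) :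
    π ↑(∏ k ∈ range (n + 2), oneSubX k ^ i (k + 1)) =
      π ↑(∏ k ∈ range n, oneSubX k ^ i (k + 1)) * (1 - i (n + 1) * π (X ^ (n + 1))) := by
  rw [prod_range_succ, prod_range_succ, Units.val_mul, Units.val_mul, map_mul, map_mul,
    mk_oneSubX_zpow_of_lt n (Nat.lt_succ_self n), mk_oneSubX_zpow, mul_one]

lemma eq_of_mk_mul_X_pow_eq {a b : ℤ} (h : a * π (X ^ (n + 1)) = b * π (X ^ (n + 1))) :
    a = b := by
  rw [← map_intCast π, ← map_intCast π, ← map_mul, ← map_mul, Ideal.Quotient.eq,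
    Ideal.mem_span_singleton, ← sub_mul] at h
  have := X_pow_dvd_iff.mp h (n + 1) (Nat.lt_succ_self _)
  rwa [← Int.cast_sub, ← zsmul_eq_mul, map_zsmul, coeff_X_pow_self, smul_eq_mul, mul_one,
    sub_eq_zero] at this

lemma exponent_eq_of_trunc_eq (i j : ℕ → ℤ) (hlt : ∀ m < n, i (m + 1) = j (m + 1))
    (h : trunc (n + 2) ((∏ k ∈ range (n + 2), oneSubX k ^ i (k + 1) : ℤ⟦X⟧ˣ) : ℤ⟦X⟧) =
      trunc (n + 2) ((∏ k ∈ range (n + 2), oneSubX k ^ j (k + 1) : ℤ⟦X⟧ˣ) : ℤ⟦X⟧)) :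
    i (n + 1) = j (n + 1) := by
  have hprod : ∏ k ∈ range n, oneSubX k ^ i (k + 1) = ∏ k ∈ range n, oneSubX k ^ j (k + 1) :=
    prod_congr rfl fun k hk => by rw [hlt k (mem_range.mp hk)]
  rw [trunc_eq_trunc_iff_mk_eq, mk_prod_oneSubX_zpow, mk_prod_oneSubX_zpow, hprod] at h
  have hunit := ((∏ k ∈ range n, oneSubX k ^ j (k + 1)).isUnit).map π
  exact eq_of_mk_mul_X_pow_eq n (sub_right_injective (hunit.mul_left_cancel h))

end ModXPow

/-- If two integer sequences give the same q-adic infinite product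
`∏_{k≥1} (1-q^k)^(i k)`, they agree (for all k ≥ 1). -/
theorem exponents_unique (i j : ℕ → ℤ)
    (h : ∀ N : ℕ,
      trunc N ((∏ k ∈ range N, oneSubX k ^ i (k + 1) : (PowerSeries ℤ)ˣ) : PowerSeries ℤ) =
      trunc N ((∏ k ∈ range N, oneSubX k ^ j (k + 1) : (PowerSeries ℤ)ˣ) : PowerSeries ℤ)) :
    ∀ k ≥ 1, i k = j k := by
  have hsucc : ∀ n, i (n + 1) = j (n + 1) := fun n =>
    Nat.strong_induction_on n fun n ih => exponent_eq_of_trunc_eq n i j ih (h (n + 2))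
  intro k hk
  obtain ⟨n, rfl⟩ := Nat.exists_eq_add_of_le' hk
  exact hsucc n
end
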